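/- Let T be a tree, u a leaf with neighbor v, T' = T − u, and w any vertex of T with w ≠ u. Then the map sending a subtree of T' containing w either to itself, or (if it contains v) additionally to its extension by the edge (u,v), gives a bijection showing η_{≤k}(T; w) = η_{≤k}(T'; w) + #{subtrees S' of T' containing both w and v with max degree ≤ k and deg_{S'}(v) ≤ k−1}. -/

import Mathlib

open SimpleGraph

/-- The degree of `v` within the vertex set `s` of the induced subgraph of `G`. -/
noncomputable def degIn {V : Type*} (G : SimpleGraph V) (s : Set V) (v : V) : ℕ :=
  {w ∈ s | G.Adj v w}.ncard

/-- `s` induces a (nonempty, connected) subtree of `G`. -/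
def IsSubtree {V : Type*} (G : SimpleGraph V) (s : Set V) : Prop :=
  s.Nonempty ∧ (G.induce s).Connected

/-- All vertex degrees within the subtree on `s` are at most `k`. -/
def MaxDegLE {V : Type*} (G : SimpleGraph V) (s : Set V) (k : ℕ) : Prop :=
  ∀ v ∈ s, degIn G s v ≤ k

/-- A BC-subtree: a subtree with at least two vertices in which any two
leaves are at even distance. -/
def IsBCSubtree {V : Type*} (G : SimpleGraph V) (s : Set V) : Prop :=
  IsSubtree G s ∧ 2 ≤ s.ncard ∧
    ∀ l₁ l₂ : s, degIn G s (l₁ : V) = 1 → degIn G s (l₂ : V) = 1 →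
      Even ((G.induce s).dist l₁ l₂)

/-- The star `K_{1,n}`: center `none`, leaves `some i`. -/
def starGraph (n : ℕ) : SimpleGraph (Option (Fin n)) :=
  SimpleGraph.fromRel (fun a _ => a = none)

/-!
A subtree `S` of `T` containing `w` either avoids the leaf `u`, and is then a subtree of `T − u`,
or contains `u`. In the second case `S` also contains `v`, the only neighbour of `u`; removing `u`
keeps `S` connected, since a path between two other vertices cannot pass through a vertex of
degree one, and it lowers the degree of `v` by one while leaving every other degree unchanged.
Conversely, adding the pendant edge `uv` to a subtree of `T − u` through `v` with
`deg v ≤ k − 1` gives a subtree of maximum degree at most `k`, as the new leaf `u` has degree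
`1 ≤ k`.
-/

lemma Nat.card_subtype_eq_card_and_add_card_and_not {α : Type*} [Finite α] (p q : α → Prop) :
    Nat.card {a // p a} = Nat.card {a // p a ∧ q a} + Nat.card {a // p a ∧ ¬ q a} := by
  classical
  rw [← Nat.card_congr (Equiv.sumCompl fun a : {a // p a} => q a), Nat.card_sum,
    Nat.card_congr (Equiv.subtypeSubtypeEquivSubtypeInter p q),
    Nat.card_congr (Equiv.subtypeSubtypeEquivSubtypeInter p (¬ q ·))]

def Set.subtypeMemEquivSubtypeNotMem {α : Type*} (P : Set α → Prop) (u : α) :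
    {s : Set α // P s ∧ u ∈ s} ≃ {s : Set α // u ∉ s ∧ P (insert u s)} where
  toFun s := ⟨s.1 \ {u}, fun h => h.2 rfl, by simpa [s.2.2] using s.2.1⟩
  invFun s := ⟨insert u s.1, s.2.2, Set.mem_insert u _⟩
  left_inv s := Subtype.ext (by simp [s.2.2])
  right_inv s := Subtype.ext (Set.insert_sdiff_self_of_notMem s.2.1)

namespace SimpleGraph

variable {V : Type*} {G : SimpleGraph V} {u v : V}

lemma induce_diff_singleton_connected (hu : (G.neighborSet u).Subsingleton) {s : Set V}
    (hs : (G.induce s).Connected) {w : V} (hws : w ∈ s) (hwu : w ≠ u) :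
    (G.induce (s \ {u})).Connected := by
  rw [connected_iff_exists_forall_reachable]
  refine ⟨⟨w, hws, hwu⟩, fun ⟨x, hxs, hxu⟩ => ?_⟩
  obtain ⟨p, hp⟩ := (hs.preconnected ⟨w, hws⟩ ⟨x, hxs⟩).exists_isPath
  set q := p.map (Embedding.induce s).toHom
  have hq : q.IsPath := hp.map Subtype.val_injective
  refine ⟨q.induce (s \ {u}) fun y hy => ⟨?_, ?_⟩⟩
  · rw [Walk.support_map, List.mem_map] at hy
    obtain ⟨y, -, rfl⟩ := hy
    exact y.2
  · rintro rfl
    exact hq.isTrail.not_mem_support_of_subsingleton_neighborSet hwu.symm (fun h => hxu h.symm)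
      hu hy

lemma mem_of_induce_connected_of_neighborSet_eq (hnbr : G.neighborSet u = {v}) {s : Set V}
    (hs : (G.induce s).Connected) (hus : u ∈ s) {w : V} (hws : w ∈ s) (hwu : w ≠ u) :
    v ∈ s := by
  have : Nontrivial s := (Set.nontrivial_of_mem_mem_ne hus hws hwu.symm).coe_sort
  obtain ⟨x, hx⟩ := hs.preconnected.exists_adj_of_nontrivial ⟨u, hus⟩
  have hxv : x.1 = v := by simpa [hnbr] using (mem_neighborSet G u x.1).2 hx
  exact hxv ▸ x.2

end SimpleGraph

section

variable {V : Type*} {G : SimpleGraph V} {s : Set V} {u v x : V}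

lemma isSubtree_insert_iff (hnbr : G.neighborSet u = {v}) (hus : u ∉ s)
    {w : V} (hws : w ∈ s) : IsSubtree G (insert u s) ↔ v ∈ s ∧ IsSubtree G s := by
  have hwu : w ≠ u := fun h => hus (h ▸ hws)
  have huv : G.Adj u v := by simp [← mem_neighborSet, hnbr]
  constructor
  · rintro ⟨-, hconn⟩
    have hv := mem_of_induce_connected_of_neighborSet_eq hnbr hconn (Set.mem_insert u s)
      (Set.mem_insert_of_mem u hws) hwu
    refine ⟨(Set.mem_insert_iff.1 hv).resolve_left huv.ne', ⟨w, hws⟩, ?_⟩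
    have hsub : (G.neighborSet u).Subsingleton := hnbr ▸ Set.subsingleton_singleton
    have := induce_diff_singleton_connected hsub hconn (Set.mem_insert_of_mem u hws) hwu
    rwa [Set.insert_sdiff_self_of_notMem hus] at this
  · rintro ⟨hvs, -, hconn⟩
    refine ⟨Set.insert_nonempty u s, ?_⟩
    have hunion : insert u s = {u, v} ∪ s := by simp [Set.insert_union, hvs]
    rw [hunion]
    exact induce_union_connected (induce_pair_connected_of_adj huv).preconnected
      hconn.preconnected ⟨v, by simp, hvs⟩

lemma degIn_insert_of_not_adj (hxu : ¬ G.Adj x u) : degIn G (insert u s) x = degIn G s x := by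
  unfold degIn
  congr 1
  ext y
  simp only [Set.mem_ofPred_eq, Set.mem_insert_iff, or_and_right]
  exact or_iff_right fun ⟨hy, hxy⟩ => hxu (hy ▸ hxy)

lemma degIn_insert_of_adj [Finite V] (hxu : G.Adj x u) (hus : u ∉ s) :
    degIn G (insert u s) x = degIn G s x + 1 := by
  unfold degIn
  have : {y ∈ insert u s | G.Adj x y} = insert u {y ∈ s | G.Adj x y} := by
    ext y
    simp only [Set.mem_ofPred_eq, Set.mem_insert_iff, or_and_right]
    exact or_congr_left ⟨And.left, fun hy => ⟨hy, hy ▸ hxu⟩⟩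
  rw [this, Set.ncard_insert_of_notMem fun h => hus h.1]

lemma degIn_eq_one_of_neighborSet_eq (hnbr : G.neighborSet u = {v}) (hvs : v ∈ s) :
    degIn G s u = 1 := by
  unfold degIn
  have : {y ∈ s | G.Adj u y} = {v} := by
    ext y
    simp only [Set.mem_ofPred_eq, ← mem_neighborSet, hnbr, Set.mem_singleton_iff]
    exact ⟨And.right, fun hy => ⟨hy ▸ hvs, hy⟩⟩
  rw [this, Set.ncard_singleton]

lemma maxDegLE_insert_iff [Finite V] (hnbr : G.neighborSet u = {v}) {k : ℕ} (hk : 1 ≤ k)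
    (hus : u ∉ s) (hvs : v ∈ s) :
    MaxDegLE G (insert u s) k ↔ MaxDegLE G s k ∧ degIn G s v ≤ k - 1 := by
  have hadj : ∀ x, G.Adj x u ↔ x = v := fun x => by
    rw [adj_comm, ← mem_neighborSet, hnbr, Set.mem_singleton_iff]
  have hv : degIn G (insert u s) v = degIn G s v + 1 := degIn_insert_of_adj ((hadj v).2 rfl) hus
  have hother : ∀ x ≠ v, degIn G (insert u s) x = degIn G s x := fun x hx =>
    degIn_insert_of_not_adj fun h => hx ((hadj x).1 h)
  constructor
  · intro h
    have hvk := h v (Set.mem_insert_of_mem u hvs)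
    refine ⟨fun x hx => ?_, by omega⟩
    rcases eq_or_ne x v with rfl | hxv
    · omega
    · simpa [hother x hxv] using h x (Set.mem_insert_of_mem u hx)
  · rintro ⟨h, hvk⟩ x hx
    rcases Set.mem_insert_iff.1 hx with rfl | hx
    · rwa [degIn_insert_of_not_adj G.irrefl, degIn_eq_one_of_neighborSet_eq hnbr hvs]
    rcases eq_or_ne x v with rfl | hxv
    · omega
    · simpa [hother x hxv] using h x hx

end

theorem stmt6_general {V : Type*} [Fintype V] (G : SimpleGraph V) (u v : V)
    (huv : G.Adj u v) (hleaf : ∀ w', G.Adj u w' → w' = v) (w : V) (hw : w ≠ u)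
    (k : ℕ) (hk : 1 ≤ k) :
    Nat.card {s : Set V // w ∈ s ∧ IsSubtree G s ∧ MaxDegLE G s k}
      = Nat.card {s : Set V // u ∉ s ∧ w ∈ s ∧ IsSubtree G s ∧ MaxDegLE G s k}
        + Nat.card {s : Set V // u ∉ s ∧ w ∈ s ∧ v ∈ s ∧ IsSubtree G s ∧
            MaxDegLE G s k ∧ degIn G s v ≤ k - 1} := by
  have hnbr : G.neighborSet u = {v} := Set.eq_singleton_iff_unique_mem.2 ⟨huv, hleaf⟩
  have hinsert : ∀ s, u ∉ s →
      (w ∈ insert u s ∧ IsSubtree G (insert u s) ∧ MaxDegLE G (insert u s) k ↔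
        w ∈ s ∧ v ∈ s ∧ IsSubtree G s ∧ MaxDegLE G s k ∧ degIn G s v ≤ k - 1) := by
    intro s hus
    rw [Set.mem_insert_iff, or_iff_right hw]
    constructor
    · rintro ⟨hws, hsub, hdeg⟩
      obtain ⟨hvs, hsub⟩ := (isSubtree_insert_iff hnbr hus hws).1 hsub
      exact ⟨hws, hvs, hsub, (maxDegLE_insert_iff hnbr hk hus hvs).1 hdeg⟩
    · rintro ⟨hws, hvs, hsub, hdeg⟩
      exact ⟨hws, (isSubtree_insert_iff hnbr hus hws).2 ⟨hvs, hsub⟩,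
        (maxDegLE_insert_iff hnbr hk hus hvs).2 hdeg⟩
  rw [Nat.card_subtype_eq_card_and_add_card_and_not _ (u ∈ ·), add_comm]
  congr 1
  · exact Nat.card_congr (Equiv.subtypeEquivRight fun s => by tauto)
  · rw [Nat.card_congr (Set.subtypeMemEquivSubtypeNotMem _ u)]
    exact Nat.card_congr (Equiv.subtypeEquivRight fun s => and_congr_right (hinsert s))

theorem stmt6 {V : Type*} [Fintype V] (G : SimpleGraph V) (hG : G.IsTree) (u v : V)
    (huv : G.Adj u v) (hleaf : ∀ w', G.Adj u w' → w' = v) (w : V) (hw : w ≠ u)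
    (k : ℕ) (hk : 1 ≤ k) :
    Nat.card {s : Set V // w ∈ s ∧ IsSubtree G s ∧ MaxDegLE G s k}
      = Nat.card {s : Set V // u ∉ s ∧ w ∈ s ∧ IsSubtree G s ∧ MaxDegLE G s k}
        + Nat.card {s : Set V // u ∉ s ∧ w ∈ s ∧ v ∈ s ∧ IsSubtree G s ∧
            MaxDegLE G s k ∧ degIn G s v ≤ k - 1} :=
  stmt6_general G u v huv hleaf w hw k hk
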